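/- Let G be the graph on vertex set V = {1,2,3} × {0,1,…,k} with the vertices (1,0),(2,0),(3,0) identified to a single vertex s and (1,k),(2,k),(3,k) identified to a single vertex s', and with edges joining (i, r−1) to (i, r) of length λ_r > 0 (the same λ_r for each i = 1,2,3), where λ_r = λ_{k−r+1} for all r. For 1 ≤ r ≤ ⌊k/2⌋, let m_r be the (2,3)-semimetric with parts S¹_r = {(i,p) : p < r}, S²_r = {(i,p) : p > k−r}, and Tʲ_r = {(j,p) : r ≤ p ≤ k−r} for j = 1,2,3; and if k is odd let m_{⌈k/2⌉} be the cut semimetric of X = {(i,p) : p ≤ ⌊k/2⌋}. Then the shortest-path distance of G equals Σ_{r=1}^{⌈k/2⌉} λ_r · m_r. -/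

import Mathlib

/-!
Fold each path at its middle: since `λ_e = λ_{k+1-e}`, any sum of edge lengths
`∑_{e ∈ E} λ_e` equals `∑_{r ≤ ⌈k/2⌉} λ_r · #(E ∩ {r, k+1-r})`. Along a shortest path from
`u` to `v` (inside one branch, or through `s` when `p + q ≤ k` and through `s'` otherwise)
the number of edges in `{r, k+1-r}` is exactly `m_r(u, v)`. For odd `k` the middle pair
`{r, k+1-r}` is a single edge, which is why the last semimetric is a cut rather than a
(2,3)-semimetric.
-/

open Finset

/-- The parts of the partition at level `r` are labelled `0` for `S¹_r`, `1` for `S²_r` and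
`2 + j` for `Tʲ_r`. -/
def pathClass (k r : ℕ) (u : Fin 3 × ℕ) : ℕ :=
  if u.2 < r then 0 else if k - r < u.2 then 1 else 2 + u.1

def semimetric23 (a b : ℕ) : ℕ :=
  if a = b then 0 else if (a ≤ 1 ∧ 2 ≤ b) ∨ (b ≤ 1 ∧ 2 ≤ a) then 1 else 2

/-- The semimetric `m_r`; the second branch is reached only for odd `k` at `r = (k + 1) / 2`. -/
def levelSemimetric (k r : ℕ) (u v : Fin 3 × ℕ) : ℕ :=
  if 2 * r ≤ k then semimetric23 (pathClass k r u) (pathClass k r v)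
  else if (u.2 ≤ k / 2 ↔ v.2 ≤ k / 2) then 0 else 1

def symmPairCount (k : ℕ) (E : Finset ℕ) (r : ℕ) : ℕ :=
  #{e ∈ E | e = r ∨ e = k + 1 - r}

theorem symmPairCount_Icc (k a b r : ℕ) :
    symmPairCount k (Icc a b) r =
      (if a ≤ r ∧ r ≤ b then 1 else 0) +
        (if a ≤ k + 1 - r ∧ k + 1 - r ≤ b ∧ k + 1 - r ≠ r then 1 else 0) := by
  have hsplit : ∀ e, (if e = r ∨ e = k + 1 - r then 1 else 0) =
      (if r = e then 1 else 0) +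
        if k + 1 - r = e then (if k + 1 - r ≠ r then 1 else 0) else 0 := by
    intro e
    split_ifs <;> omega
  rw [symmPairCount, card_filter]
  simp only [hsplit, sum_add_distrib, sum_ite_eq, mem_Icc]
  split_ifs <;> omega

theorem sum_eq_sum_mul_symmPairCount {k : ℕ} {lam : ℕ → ℝ}
    (hsymm : ∀ r ∈ Icc 1 k, lam r = lam (k - r + 1)) {E : Finset ℕ} (hE : E ⊆ Icc 1 k) :
    ∑ e ∈ E, lam e = ∑ r ∈ Icc 1 ((k + 1) / 2), lam r * symmPairCount k E r := by
  have hE' : ∀ e ∈ E, 1 ≤ e ∧ e ≤ k := fun e he => mem_Icc.1 (hE he)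
  calc ∑ e ∈ E, lam e = ∑ e ∈ E, lam (min e (k + 1 - e)) := by
        refine sum_congr rfl fun e he => ?_
        have := hE' e he
        rcases le_total e (k + 1 - e) with h | h
        · rw [min_eq_left h]
        · rw [min_eq_right h, hsymm e (hE he)]
          congr 1
          omega
    _ = ∑ r ∈ Icc 1 ((k + 1) / 2),
          ∑ e ∈ E with min e (k + 1 - e) = r, lam (min e (k + 1 - e)) :=
        (sum_fiberwise_of_maps_to
          (fun e he => by have := hE' e he; simp only [mem_Icc]; omega) _).symm
    _ = ∑ r ∈ Icc 1 ((k + 1) / 2), lam r * symmPairCount k E r := by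
        refine sum_congr rfl fun r hr => ?_
        rw [sum_congr rfl fun e he => congrArg lam (mem_filter.1 he).2, sum_const, nsmul_eq_mul,
          mul_comm, symmPairCount]
        congr 3
        refine filter_congr fun e he => ?_
        have := hE' e he
        have := mem_Icc.1 hr
        omega

section

variable {k r p q : ℕ}

theorem levelSemimetric_same_path (hr : r ∈ Icc 1 ((k + 1) / 2)) (i : Fin 3) :
    levelSemimetric k r (i, p) (i, q) = symmPairCount k (Icc (min p q + 1) (max p q)) r := by
  rw [mem_Icc] at hr
  simp only [levelSemimetric, semimetric23, pathClass, symmPairCount_Icc]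
  split_ifs <;> omega

theorem levelSemimetric_of_add_le {i j : Fin 3} (hij : i ≠ j) (hr : r ∈ Icc 1 ((k + 1) / 2))
    (h : p + q ≤ k) :
    levelSemimetric k r (i, p) (j, q) =
      symmPairCount k (Icc 1 p) r + symmPairCount k (Icc 1 q) r := by
  have hij' := Fin.val_ne_of_ne hij
  rw [mem_Icc] at hr
  simp only [levelSemimetric, semimetric23, pathClass, symmPairCount_Icc]
  split_ifs <;> omega

theorem levelSemimetric_of_le_add {i j : Fin 3} (hij : i ≠ j) (hr : r ∈ Icc 1 ((k + 1) / 2))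
    (h : k ≤ p + q) :
    levelSemimetric k r (i, p) (j, q) =
      symmPairCount k (Icc (p + 1) k) r + symmPairCount k (Icc (q + 1) k) r := by
  have hij' := Fin.val_ne_of_ne hij
  rw [mem_Icc] at hr
  simp only [levelSemimetric, semimetric23, pathClass, symmPairCount_Icc]
  split_ifs <;> omega

theorem symmPairCount_prefix_le_suffix (h : p + q ≤ k) :
    symmPairCount k (Icc 1 p) r ≤ symmPairCount k (Icc (q + 1) k) r := by
  simp only [symmPairCount_Icc]
  split_ifs <;> omega

theorem symmPairCount_suffix_le_prefix (h : k ≤ p + q) :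
    symmPairCount k (Icc (p + 1) k) r ≤ symmPairCount k (Icc 1 q) r := by
  simp only [symmPairCount_Icc]
  split_ifs <;> omega

variable {lam : ℕ → ℝ}

theorem sum_Icc_eq_sum_levelSemimetric_same_path
    (hsymm : ∀ r ∈ Icc 1 k, lam r = lam (k - r + 1)) (hp : p ≤ k) (hq : q ≤ k) (i : Fin 3) :
    ∑ e ∈ Icc (min p q + 1) (max p q), lam e =
      ∑ r ∈ Icc 1 ((k + 1) / 2), lam r * levelSemimetric k r (i, p) (i, q) := by
  rw [sum_eq_sum_mul_symmPairCount hsymm (Icc_subset_Icc (by omega) (by omega))]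
  exact sum_congr rfl fun r hr => by rw [levelSemimetric_same_path hr]

theorem min_sum_Icc_eq_sum_levelSemimetric
    (hsymm : ∀ r ∈ Icc 1 k, lam r = lam (k - r + 1)) (hnonneg : ∀ r ∈ Icc 1 k, 0 ≤ lam r)
    {i j : Fin 3} (hij : i ≠ j) (hp : p ≤ k) (hq : q ≤ k) :
    min ((∑ e ∈ Icc 1 p, lam e) + ∑ e ∈ Icc 1 q, lam e)
        ((∑ e ∈ Icc (p + 1) k, lam e) + ∑ e ∈ Icc (q + 1) k, lam e) =
      ∑ r ∈ Icc 1 ((k + 1) / 2), lam r * levelSemimetric k r (i, p) (j, q) := by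
  have hsub : ∀ {a b}, 1 ≤ a → b ≤ k → Icc a b ⊆ Icc 1 k := Icc_subset_Icc
  simp only [sum_eq_sum_mul_symmPairCount hsymm (hsub le_rfl hp),
    sum_eq_sum_mul_symmPairCount hsymm (hsub le_rfl hq),
    sum_eq_sum_mul_symmPairCount hsymm (hsub (Nat.le_add_left 1 p) le_rfl),
    sum_eq_sum_mul_symmPairCount hsymm (hsub (Nat.le_add_left 1 q) le_rfl),
    ← sum_add_distrib, ← mul_add, ← Nat.cast_add]
  have hlam : ∀ r ∈ Icc 1 ((k + 1) / 2), 0 ≤ lam r := fun r hr =>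
    hnonneg r (by simp only [mem_Icc] at hr ⊢; omega)
  rcases le_total (p + q) k with h | h
  · rw [min_eq_left (sum_le_sum fun r hr => mul_le_mul_of_nonneg_left ?_ (hlam r hr))]
    · exact sum_congr rfl fun r hr => by rw [levelSemimetric_of_add_le hij hr h]
    · exact_mod_cast (add_le_add (symmPairCount_prefix_le_suffix h)
        (symmPairCount_prefix_le_suffix (by omega))).trans_eq (add_comm _ _)
  · rw [min_eq_right (sum_le_sum fun r hr => mul_le_mul_of_nonneg_left ?_ (hlam r hr))]
    · exact sum_congr rfl fun r hr => by rw [levelSemimetric_of_le_add hij hr h]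
    · exact_mod_cast (add_le_add (symmPairCount_suffix_le_prefix h)
        (symmPairCount_suffix_le_prefix (by omega))).trans_eq (add_comm _ _)

end

theorem three_path_distance_decomposition_general (k : ℕ) (lam : ℕ → ℝ)
    (hpos : ∀ r ∈ Finset.Icc 1 k, 0 < lam r)
    (hsymm : ∀ r ∈ Finset.Icc 1 k, lam r = lam (k - r + 1))
    (d : Fin 3 × ℕ → Fin 3 × ℕ → ℝ)
    (hd_same : ∀ (i : Fin 3) (p q : ℕ), p ≤ k → q ≤ k →
      d (i, p) (i, q) = ∑ r ∈ Finset.Icc (min p q + 1) (max p q), lam r)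
    (hd_diff : ∀ (i j : Fin 3) (p q : ℕ), i ≠ j → p ≤ k → q ≤ k →
      d (i, p) (j, q) =
        min ((∑ r ∈ Finset.Icc 1 p, lam r) + ∑ r ∈ Finset.Icc 1 q, lam r)
          ((∑ r ∈ Finset.Icc (p + 1) k, lam r) + ∑ r ∈ Finset.Icc (q + 1) k, lam r))
    (cls : ℕ → Fin 3 × ℕ → ℕ)
    (hcls : ∀ r (i : Fin 3) (p : ℕ),
      cls r (i, p) = if p < r then 0 else if k - r < p then 1 else 2 + (i : ℕ))
    (m : ℕ → Fin 3 × ℕ → Fin 3 × ℕ → ℝ)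
    (hm23 : ∀ r, 1 ≤ r → 2 * r ≤ k → ∀ u v, m r u v =
      if cls r u = cls r v then 0
      else if (cls r u ≤ 1 ∧ 2 ≤ cls r v) ∨ (cls r v ≤ 1 ∧ 2 ≤ cls r u) then 1
      else 2)
    (hmcut : k % 2 = 1 → ∀ u v : Fin 3 × ℕ,
      m ((k + 1) / 2) u v = if (u.2 ≤ k / 2 ↔ v.2 ≤ k / 2) then 0 else 1) :
    ∀ u v : Fin 3 × ℕ, u.2 ≤ k → v.2 ≤ k →
      d u v = ∑ r ∈ Finset.Icc 1 ((k + 1) / 2), lam r * m r u v := by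
  have hcls_eq : ∀ r u, cls r u = pathClass k r u := fun r ⟨i, p⟩ => hcls r i p
  have hm : ∀ r ∈ Icc 1 ((k + 1) / 2), ∀ u v, m r u v = levelSemimetric k r u v := by
    intro r hr u v
    rw [mem_Icc] at hr
    by_cases h2r : 2 * r ≤ k
    · rw [hm23 r hr.1 h2r, hcls_eq, hcls_eq, levelSemimetric, if_pos h2r, semimetric23]
      simp only [Nat.cast_ite, Nat.cast_zero, Nat.cast_one, Nat.cast_ofNat]
    · obtain rfl : r = (k + 1) / 2 := by omega
      rw [hmcut (by omega), levelSemimetric, if_neg h2r]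
      simp only [Nat.cast_ite, Nat.cast_zero, Nat.cast_one]
  rintro ⟨i, p⟩ ⟨j, q⟩ (hp : p ≤ k) (hq : q ≤ k)
  rw [sum_congr rfl fun r hr => by rw [hm r hr]]
  rcases eq_or_ne i j with rfl | hij
  · rw [hd_same i p q hp hq]
    exact sum_Icc_eq_sum_levelSemimetric_same_path hsymm hp hq i
  · rw [hd_diff i j p q hij hp hq]
    exact min_sum_Icc_eq_sum_levelSemimetric hsymm (fun r hr => (hpos r hr).le) hij hp hq

/-- In the graph made of three internally disjoint paths between `s`
and `s'`, each with edges of lengths `λ₁, …, λ_k` satisfying `λ_r = λ_{k−r+1}`, the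
shortest-path distance (given by the explicit formulas below on vertices `(i, p)`,
`i ∈ {1,2,3}`, `0 ≤ p ≤ k`, with the endpoints identified) equals the weighted sum
`Σ_{r=1}^{⌈k/2⌉} λ_r · m_r` of the (2,3)-semimetrics `m_r` (`1 ≤ r ≤ ⌊k/2⌋`) with
parts `S¹_r = {p < r}`, `S²_r = {p > k−r}`, `Tʲ_r = {(j,p) : r ≤ p ≤ k−r}` and, for
`k` odd, of the cut semimetric `m_{⌈k/2⌉}` of `X = {p ≤ ⌊k/2⌋}`. -/
theorem three_path_distance_decomposition (k : ℕ) (hk : 1 ≤ k) (lam : ℕ → ℝ)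
    (hpos : ∀ r ∈ Finset.Icc 1 k, 0 < lam r)
    (hsymm : ∀ r ∈ Finset.Icc 1 k, lam r = lam (k - r + 1))
    (d : Fin 3 × ℕ → Fin 3 × ℕ → ℝ)
    (hd_same : ∀ (i : Fin 3) (p q : ℕ), p ≤ k → q ≤ k →
      d (i, p) (i, q) = ∑ r ∈ Finset.Icc (min p q + 1) (max p q), lam r)
    (hd_diff : ∀ (i j : Fin 3) (p q : ℕ), i ≠ j → p ≤ k → q ≤ k →
      d (i, p) (j, q) =
        min ((∑ r ∈ Finset.Icc 1 p, lam r) + ∑ r ∈ Finset.Icc 1 q, lam r)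
          ((∑ r ∈ Finset.Icc (p + 1) k, lam r) + ∑ r ∈ Finset.Icc (q + 1) k, lam r))
    (cls : ℕ → Fin 3 × ℕ → ℕ)
    (hcls : ∀ r (i : Fin 3) (p : ℕ),
      cls r (i, p) = if p < r then 0 else if k - r < p then 1 else 2 + (i : ℕ))
    (m : ℕ → Fin 3 × ℕ → Fin 3 × ℕ → ℝ)
    (hm23 : ∀ r, 1 ≤ r → 2 * r ≤ k → ∀ u v, m r u v =
      if cls r u = cls r v then 0
      else if (cls r u ≤ 1 ∧ 2 ≤ cls r v) ∨ (cls r v ≤ 1 ∧ 2 ≤ cls r u) then 1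
      else 2)
    (hmcut : k % 2 = 1 → ∀ u v : Fin 3 × ℕ,
      m ((k + 1) / 2) u v = if (u.2 ≤ k / 2 ↔ v.2 ≤ k / 2) then 0 else 1) :
    ∀ u v : Fin 3 × ℕ, u.2 ≤ k → v.2 ≤ k →
      d u v = ∑ r ∈ Finset.Icc 1 ((k + 1) / 2), lam r * m r u v :=
  three_path_distance_decomposition_general k lam hpos hsymm d hd_same hd_diff cls hcls m hm23 hmcut
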